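/- Let L, C, R, G, K > 0, let i* : [0,1] → ℝ be C¹ and v* : [0,1] → ℝ be C¹ with G·v*(z) + (i*)′(z) = 0 on [0,1]. Let i, v : [0,1] × ℝ → ℝ be smooth (at least C²) and satisfy the closed-loop equations L·∂i/∂t = −∂/∂z( v − v* ) − (R + K)·(i − i*) and C·∂v/∂t = −∂i/∂z − G·v on [0,1] × ℝ. Assume (∂i/∂t)(0,t) = (∂i/∂t)(1,t) = 0 for all t, and for all t: ∫₀¹ (∂²v/∂z∂t)² dz ≤ (G²·L/C)·∫₀¹ (∂v/∂t)² dz. Then the closed-loop shaped potential P_d(t) = (1/(2G))·∫₀¹ [ (G·v + ∂i/∂z)² + G·(K + R)·(i − i*)² + (G·v* + ∂i/∂z)² ] dz is nonincreasing: dP_d/dt ≤ 0 for all t. Moreover P_d(t) ≥ 0, with P_d(t) = 0 exactly when i(·,t) = i* and v(·,t) = v*, so the closed-loop system has a stable equilibrium at (i*, v*). -/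

import Mathlib

/-!
Along a solution, the time derivative of the integrand of `P_d` splits, by the two closed-loop
equations, into the dissipation density `-2CG (∂ₜv)² - 2GL (∂ₜi)² + 4C ∂²_{zt}v ∂ₜi` plus the
`z`-derivative of the flux `-(2G (v - v*) + 4C ∂ₜv) ∂ₜi`, which vanishes at both ends of the
line because `∂ₜi` does. Completing the square in `∂ₜi` bounds the dissipation density by
`(2C²/(GL)) (∂²_{zt}v)² - 2CG (∂ₜv)²`, whose integral is nonpositive by the operator-norm
condition. Nonnegativity and the zero set of `P_d` are read off the sum of squares, using
`G v* + (i*)' = 0` for the equilibrium.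
-/

open Set MeasureTheory Function
open scoped Interval

section PartialDerivatives

variable {E : Type*} [NormedAddCommGroup E] [NormedSpace ℝ E]

theorem HasFDerivAt.hasDerivAt_prodMk_left {g : ℝ × ℝ → E} {g' : ℝ × ℝ →L[ℝ] E} {z t : ℝ}
    (hg : HasFDerivAt g g' (z, t)) : HasDerivAt (fun w => g (w, t)) (g' (1, 0)) z :=
  hg.comp_hasDerivAt z ((hasDerivAt_id z).prodMk (hasDerivAt_const z t))

theorem HasFDerivAt.hasDerivAt_prodMk_right {g : ℝ × ℝ → E} {g' : ℝ × ℝ →L[ℝ] E} {z t : ℝ}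
    (hg : HasFDerivAt g g' (z, t)) : HasDerivAt (fun τ => g (z, τ)) (g' (0, 1)) t :=
  hg.comp_hasDerivAt t ((hasDerivAt_const t z).prodMk (hasDerivAt_id t))

variable {f : ℝ → ℝ → E} {z t : ℝ}

noncomputable def partialFst (f : ℝ → ℝ → E) (z t : ℝ) : E :=
  fderiv ℝ (uncurry f) (z, t) (1, 0)

noncomputable def partialSnd (f : ℝ → ℝ → E) (z t : ℝ) : E :=
  fderiv ℝ (uncurry f) (z, t) (0, 1)

noncomputable def partialFstSnd (f : ℝ → ℝ → E) (z t : ℝ) : E :=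
  fderiv ℝ (fderiv ℝ (uncurry f)) (z, t) (1, 0) (0, 1)

theorem hasDerivAt_partialFst (hf : DifferentiableAt ℝ (uncurry f) (z, t)) :
    HasDerivAt (fun w => f w t) (partialFst f z t) z :=
  hf.hasFDerivAt.hasDerivAt_prodMk_left

theorem hasDerivAt_partialSnd (hf : DifferentiableAt ℝ (uncurry f) (z, t)) :
    HasDerivAt (f z) (partialSnd f z t) t :=
  hf.hasFDerivAt.hasDerivAt_prodMk_right

theorem hasDerivAt_partialSnd_left (hf : ContDiff ℝ 2 (uncurry f)) :
    HasDerivAt (fun w => partialSnd f w t) (partialFstSnd f z t) z :=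
  have hf' : DifferentiableAt ℝ (fderiv ℝ (uncurry f)) (z, t) :=
    (hf.fderiv_right le_rfl).differentiable one_ne_zero _
  (ContinuousLinearMap.apply ℝ E ((0 : ℝ), (1 : ℝ))).hasFDerivAt.comp_hasDerivAt z
    hf'.hasFDerivAt.hasDerivAt_prodMk_left

theorem hasDerivAt_partialFst_right (hf : ContDiff ℝ 2 (uncurry f)) :
    HasDerivAt (fun τ => partialFst f z τ) (partialFstSnd f z t) t := by
  have hf' : DifferentiableAt ℝ (fderiv ℝ (uncurry f)) (z, t) :=
    (hf.fderiv_right le_rfl).differentiable one_ne_zero _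
  have hsymm := (hf.contDiffAt (x := (z, t))).isSymmSndFDerivAt (by simp) (0, 1) (1, 0)
  rw [partialFstSnd, ← hsymm]
  exact (ContinuousLinearMap.apply ℝ E ((1 : ℝ), (0 : ℝ))).hasFDerivAt.comp_hasDerivAt t
    hf'.hasFDerivAt.hasDerivAt_prodMk_right

theorem continuous_partialFst (hf : ContDiff ℝ 1 (uncurry f)) :
    Continuous (uncurry (partialFst f)) :=
  (hf.continuous_fderiv one_ne_zero).clm_apply continuous_const

theorem continuous_partialSnd (hf : ContDiff ℝ 1 (uncurry f)) :
    Continuous (uncurry (partialSnd f)) :=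
  (hf.continuous_fderiv one_ne_zero).clm_apply continuous_const

theorem continuous_partialFstSnd (hf : ContDiff ℝ 2 (uncurry f)) :
    Continuous (uncurry (partialFstSnd f)) :=
  (((hf.fderiv_right le_rfl).continuous_fderiv one_ne_zero).clm_apply continuous_const).clm_apply
    continuous_const

end PartialDerivatives

theorem hasDerivAt_intervalIntegral_of_continuous {E : Type*} [NormedAddCommGroup E]
    [NormedSpace ℝ E] {F F' : ℝ → ℝ → E} (hF : Continuous (uncurry F))
    (hF' : Continuous (uncurry F')) (hFF' : ∀ t z, HasDerivAt (fun τ => F τ z) (F' t z) t)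
    (a b t₀ : ℝ) :
    HasDerivAt (fun t => ∫ z in a..b, F t z) (∫ z in a..b, F' t₀ z) t₀ := by
  obtain ⟨M, hM⟩ := (isCompact_Icc.prod isCompact_uIcc :
    IsCompact (Icc (t₀ - 1) (t₀ + 1) ×ˢ uIcc a b)).exists_bound_of_continuousOn hF'.continuousOn
  have hFt : ∀ t, Continuous (F t) := fun t => hF.comp (Continuous.prodMk_right t)
  have hF'_bound : ∀ z ∈ Ι a b, ∀ t ∈ Metric.ball t₀ 1, ‖F' t z‖ ≤ M := by
    intro z hz t ht
    rw [Real.ball_eq_Ioo] at ht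
    exact hM (t, z) ⟨Ioo_subset_Icc_self ht, uIoc_subset_uIcc hz⟩
  exact (intervalIntegral.hasDerivAt_integral_of_dominated_loc_of_deriv_le
    (Metric.ball_mem_nhds t₀ one_pos) (.of_forall fun t => (hFt t).aestronglyMeasurable)
    ((hFt t₀).intervalIntegrable a b) (hF'.comp (Continuous.prodMk_right t₀)).aestronglyMeasurable
    (ae_of_all _ hF'_bound) intervalIntegrable_const (ae_of_all _ fun z _ t _ => hFF' t z)).2

theorem intervalIntegral.integral_eq_zero_iff_eqOn_of_nonneg {f : ℝ → ℝ} {a b : ℝ} (hab : a < b)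
    (hf : ContinuousOn f (Icc a b)) (hf₀ : ∀ x ∈ Icc a b, 0 ≤ f x) :
    ∫ x in a..b, f x = 0 ↔ EqOn f 0 (Icc a b) := by
  rw [integral_eq_zero_iff_of_le_of_nonneg_ae hab.le
      ((ae_restrict_mem measurableSet_Ioc).mono fun x hx => hf₀ x (Ioc_subset_Icc_self hx))
      (hf.intervalIntegrable_of_Icc hab.le),
    Measure.restrict_congr_set Ioc_ae_eq_Icc]
  exact ⟨fun h => Measure.eqOn_Icc_of_ae_eq _ hab.ne h hf continuousOn_const,
    fun h => (ae_restrict_mem measurableSet_Icc).mono h⟩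

theorem integral_dissipation_nonpos {L C G a b : ℝ} (hL : 0 < L) (hC : 0 < C) (hG : 0 < G)
    (hab : a ≤ b) {A B W : ℝ → ℝ} (hA : Continuous A) (hB : Continuous B) (hW : Continuous W)
    (hWA : ∫ z in a..b, W z ^ 2 ≤ G ^ 2 * L / C * ∫ z in a..b, A z ^ 2) :
    ∫ z in a..b, (-(2 * C * G) * A z ^ 2 - 2 * G * L * B z ^ 2 + 4 * C * W z * B z) ≤ 0 := by
  have hpt : ∀ z ∈ Icc a b, -(2 * C * G) * A z ^ 2 - 2 * G * L * B z ^ 2 + 4 * C * W z * B z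
      ≤ 2 * C ^ 2 / (G * L) * W z ^ 2 - 2 * C * G * A z ^ 2 := by
    intro z _
    have hsq : 0 ≤ 2 / (G * L) * (G * L * B z - C * W z) ^ 2 := by positivity
    have hexp : 2 / (G * L) * (G * L * B z - C * W z) ^ 2
        = 2 * G * L * B z ^ 2 - 4 * C * W z * B z + 2 * C ^ 2 / (G * L) * W z ^ 2 := by
      field_simp
      ring
    linarith
  have hA2 : Continuous fun z => A z ^ 2 := by fun_prop
  have hW2 : Continuous fun z => W z ^ 2 := by fun_prop
  calc ∫ z in a..b, (-(2 * C * G) * A z ^ 2 - 2 * G * L * B z ^ 2 + 4 * C * W z * B z)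
      ≤ ∫ z in a..b, (2 * C ^ 2 / (G * L) * W z ^ 2 - 2 * C * G * A z ^ 2) :=
        intervalIntegral.integral_mono_on hab ((by fun_prop : Continuous _).intervalIntegrable _ _)
          ((by fun_prop : Continuous _).intervalIntegrable _ _) hpt
    _ = 2 * C ^ 2 / (G * L) * (∫ z in a..b, W z ^ 2) - 2 * C * G * ∫ z in a..b, A z ^ 2 := by
        rw [intervalIntegral.integral_sub ((hW2.const_mul _).intervalIntegrable _ _)
            ((hA2.const_mul _).intervalIntegrable _ _),
          intervalIntegral.integral_const_mul, intervalIntegral.integral_const_mul]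
    _ ≤ 2 * C ^ 2 / (G * L) * (G ^ 2 * L / C * ∫ z in a..b, A z ^ 2)
          - 2 * C * G * ∫ z in a..b, A z ^ 2 := by gcongr
    _ = 0 := by field_simp; ring

section ClosedLoop

variable {L C R G K : ℝ} {istar vstar : ℝ → ℝ} {i v : ℝ → ℝ → ℝ} {t z : ℝ}

noncomputable def potentialDensity (G K R : ℝ) (istar vstar : ℝ → ℝ) (i v : ℝ → ℝ → ℝ)
    (t z : ℝ) : ℝ :=
  (G * v z t + deriv (fun w => i w t) z) ^ 2 + G * (K + R) * (i z t - istar z) ^ 2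
    + (G * vstar z + deriv (fun w => i w t) z) ^ 2

noncomputable def potentialRate (G K R : ℝ) (istar vstar : ℝ → ℝ) (i v : ℝ → ℝ → ℝ)
    (t z : ℝ) : ℝ :=
  2 * (G * v z t + partialFst i z t) * (G * partialSnd v z t + partialFstSnd i z t)
    + 2 * G * (K + R) * (i z t - istar z) * partialSnd i z t
    + 2 * (G * vstar z + partialFst i z t) * partialFstSnd i z t

noncomputable def energyFlux (C G : ℝ) (vstar : ℝ → ℝ) (i v : ℝ → ℝ → ℝ) (t z : ℝ) : ℝ :=
  -(2 * G * (v z t - vstar z) + 4 * C * partialSnd v z t) * partialSnd i z t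

theorem potentialDensity_nonneg (hG : 0 ≤ G) (hKR : 0 ≤ K + R) (t z : ℝ) :
    0 ≤ potentialDensity G K R istar vstar i v t z := by
  unfold potentialDensity
  positivity

theorem potentialDensity_eq (hi : Differentiable ℝ (uncurry i)) :
    potentialDensity G K R istar vstar i v = fun t z =>
      (G * v z t + partialFst i z t) ^ 2 + G * (K + R) * (i z t - istar z) ^ 2
        + (G * vstar z + partialFst i z t) ^ 2 := by
  have hiz : ∀ z t, deriv (fun w => i w t) z = partialFst i z t := fun z t =>
    (hasDerivAt_partialFst (hi (z, t))).deriv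
  ext t z
  simp only [potentialDensity, hiz]

theorem continuous_potentialDensity (histar : Continuous istar) (hvstar : Continuous vstar)
    (hi : ContDiff ℝ 1 (uncurry i)) (hv : Continuous (uncurry v)) :
    Continuous (uncurry (potentialDensity G K R istar vstar i v)) := by
  have := continuous_partialFst hi
  have := hi.continuous
  rw [potentialDensity_eq (hi.differentiable one_ne_zero)]
  fun_prop

theorem continuous_potentialRate (histar : Continuous istar) (hvstar : Continuous vstar)
    (hi : ContDiff ℝ 2 (uncurry i)) (hv : ContDiff ℝ 1 (uncurry v)) :
    Continuous (uncurry (potentialRate G K R istar vstar i v)) := by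
  have := continuous_partialFst (hi.of_le one_le_two)
  have := continuous_partialSnd (hi.of_le one_le_two)
  have := continuous_partialFstSnd hi
  have := continuous_partialSnd hv
  have := hi.continuous
  have := hv.continuous
  unfold potentialRate
  fun_prop

theorem hasDerivAt_potentialDensity (hi : ContDiff ℝ 2 (uncurry i))
    (hv : Differentiable ℝ (uncurry v)) (t z : ℝ) :
    HasDerivAt (fun τ => potentialDensity G K R istar vstar i v τ z)
      (potentialRate G K R istar vstar i v t z) t := by
  have hit := hasDerivAt_partialSnd (hi.differentiable two_ne_zero (z, t))
  have hvt := hasDerivAt_partialSnd (hv (z, t))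
  have hizt := hasDerivAt_partialFst_right hi (z := z) (t := t)
  rw [potentialDensity_eq (hi.differentiable two_ne_zero)]
  refine ((((hvt.const_mul G).add hizt).pow 2).add
    (((hit.sub_const (istar z)).pow 2).const_mul (G * (K + R)))).add
    ((hizt.const_add (G * vstar z)).pow 2) |>.congr_deriv ?_
  simp only [potentialRate, Pi.add_apply]
  ring

theorem hasDerivAt_energyFlux (hvstar : ContDiff ℝ 1 vstar) (hi : ContDiff ℝ 2 (uncurry i))
    (hv : ContDiff ℝ 2 (uncurry v))
    (heq1 : L * deriv (i z) t = -(deriv (fun w => v w t - vstar w) z)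
      - (R + K) * (i z t - istar z))
    (heq2 : C * deriv (v z) t = -(deriv (fun w => i w t) z) - G * v z t) :
    HasDerivAt (energyFlux C G vstar i v t)
      (potentialRate G K R istar vstar i v t z - (-(2 * C * G) * partialSnd v z t ^ 2
        - 2 * G * L * partialSnd i z t ^ 2 + 4 * C * partialFstSnd v z t * partialSnd i z t)) z := by
  have hvz := hasDerivAt_partialFst (hv.differentiable two_ne_zero (z, t))
  have hvz' : HasDerivAt (fun w => v w t - vstar w) (partialFst v z t - deriv vstar z) z :=
    hvz.sub (hvstar.differentiable one_ne_zero z).hasDerivAt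
  rw [(hasDerivAt_partialSnd (hi.differentiable two_ne_zero (z, t))).deriv, hvz'.deriv] at heq1
  rw [(hasDerivAt_partialSnd (hv.differentiable two_ne_zero (z, t))).deriv,
    (hasDerivAt_partialFst (hi.differentiable two_ne_zero (z, t))).deriv] at heq2
  refine (((hvz'.const_mul (2 * G)).add
    ((hasDerivAt_partialSnd_left hv).const_mul (4 * C))).neg.mul
    (hasDerivAt_partialSnd_left hi)).congr_deriv ?_
  simp only [potentialRate, Pi.add_apply, Pi.neg_apply]
  linear_combination (-2 * (G * partialSnd v z t + partialFstSnd i z t)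
    - 2 * partialFstSnd i z t) * heq2 - (2 * G * partialSnd i z t) * heq1

theorem integral_potentialRate_nonpos (hL : 0 < L) (hC : 0 < C) (hG : 0 < G)
    (histar : Continuous istar) (hvstar : ContDiff ℝ 1 vstar)
    (hi : ContDiff ℝ 2 (uncurry i)) (hv : ContDiff ℝ 2 (uncurry v))
    (heq1 : ∀ z ∈ Icc (0:ℝ) 1, L * deriv (i z) t = -(deriv (fun w => v w t - vstar w) z)
      - (R + K) * (i z t - istar z))
    (heq2 : ∀ z ∈ Icc (0:ℝ) 1, C * deriv (v z) t = -(deriv (fun w => i w t) z) - G * v z t)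
    (hbd : deriv (i 0) t = 0 ∧ deriv (i 1) t = 0)
    (hop : (∫ z in (0:ℝ)..1, (deriv (fun w => deriv (v w) t) z) ^ 2)
      ≤ G ^ 2 * L / C * ∫ z in (0:ℝ)..1, (deriv (v z) t) ^ 2) :
    ∫ z in (0:ℝ)..1, potentialRate G K R istar vstar i v t z ≤ 0 := by
  have hit : ∀ z, deriv (i z) t = partialSnd i z t := fun z =>
    (hasDerivAt_partialSnd (hi.differentiable two_ne_zero (z, t))).deriv
  have hvt : ∀ z, deriv (v z) t = partialSnd v z t := fun z =>
    (hasDerivAt_partialSnd (hv.differentiable two_ne_zero (z, t))).deriv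
  have hvzt : ∀ z, deriv (fun w => partialSnd v w t) z = partialFstSnd v z t := fun z =>
    (hasDerivAt_partialSnd_left hv).deriv
  have := continuous_partialSnd (hi.of_le one_le_two)
  have := continuous_partialSnd (hv.of_le one_le_two)
  have := continuous_partialFstSnd hv
  have hrate : Continuous (potentialRate G K R istar vstar i v t) :=
    (continuous_potentialRate histar hvstar.continuous hi (hv.of_le one_le_two)).comp
      (Continuous.prodMk_right t)
  set Q := fun z => -(2 * C * G) * partialSnd v z t ^ 2 - 2 * G * L * partialSnd i z t ^ 2
    + 4 * C * partialFstSnd v z t * partialSnd i z t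
  have hQ : Continuous Q := by fun_prop
  have hdiss : ∫ z in (0:ℝ)..1, Q z ≤ 0 :=
    integral_dissipation_nonpos hL hC hG zero_le_one (by fun_prop) (by fun_prop) (by fun_prop)
      (by simpa only [hvt, hvzt] using hop)
  have hflux : ∫ z in (0:ℝ)..1, (potentialRate G K R istar vstar i v t z - Q z) = 0 := by
    rw [intervalIntegral.integral_eq_sub_of_hasDerivAt (f := energyFlux C G vstar i v t)]
    · simp [energyFlux, ← hit, hbd]
    · intro z hz
      rw [uIcc_of_le zero_le_one] at hz
      exact hasDerivAt_energyFlux hvstar hi hv (heq1 z hz) (heq2 z hz)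
    · exact (hrate.sub hQ).intervalIntegrable _ _
  rw [intervalIntegral.integral_sub (hrate.intervalIntegrable _ _) (hQ.intervalIntegrable _ _)]
    at hflux
  linarith

theorem eq_of_potentialDensity_eq_zero (hG : 0 < G) (hKR : 0 < K + R)
    (h : potentialDensity G K R istar vstar i v t z = 0) : i z t = istar z ∧ v z t = vstar z := by
  unfold potentialDensity at h
  set d := deriv (fun w => i w t) z
  have h₁ : 0 ≤ (G * v z t + d) ^ 2 := sq_nonneg _
  have h₂ : 0 ≤ G * (K + R) * (i z t - istar z) ^ 2 := by positivity
  have h₃ : 0 ≤ (G * vstar z + d) ^ 2 := sq_nonneg _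
  have hi : G * (K + R) * (i z t - istar z) ^ 2 = 0 := by linarith
  have hv : G * v z t + d = 0 := pow_eq_zero_iff two_ne_zero |>.1 (by linarith)
  have hvstar : G * vstar z + d = 0 := pow_eq_zero_iff two_ne_zero |>.1 (by linarith)
  refine ⟨by simpa [hG.ne', hKR.ne', sub_eq_zero] using hi, ?_⟩
  exact mul_left_cancel₀ hG.ne' (by linarith)

theorem potentialDensity_eq_zero_of_eqOn (hstar : G * vstar z + deriv istar z = 0)
    (hi : EqOn (fun w => i w t) istar (Ioo 0 1)) (hv : v z t = vstar z) (hz : z ∈ Ioo 0 1) :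
    potentialDensity G K R istar vstar i v t z = 0 := by
  have hderiv : deriv (fun w => i w t) z = deriv istar z :=
    (Filter.eventuallyEq_of_mem (isOpen_Ioo.mem_nhds hz) hi).deriv_eq
  simp [potentialDensity, hderiv, hv, hi hz, hstar]

theorem eqOn_potentialDensity_zero_iff (hG : 0 < G) (hKR : 0 < K + R)
    (hstar : ∀ z ∈ Icc (0:ℝ) 1, G * vstar z + deriv istar z = 0)
    (hcont : Continuous (potentialDensity G K R istar vstar i v t)) :
    EqOn (potentialDensity G K R istar vstar i v t) 0 (Icc 0 1)
      ↔ ∀ z ∈ Icc (0:ℝ) 1, i z t = istar z ∧ v z t = vstar z := by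
  refine ⟨fun h z hz => eq_of_potentialDensity_eq_zero hG hKR (h hz), fun h => ?_⟩
  have hIoo : EqOn (potentialDensity G K R istar vstar i v t) 0 (Ioo 0 1) := fun z hz =>
    potentialDensity_eq_zero_of_eqOn (hstar z (Ioo_subset_Icc_self hz))
      (fun w hw => (h w (Ioo_subset_Icc_self hw)).1) (h z (Ioo_subset_Icc_self hz)).2 hz
  exact hIoo.of_subset_closure hcont.continuousOn continuousOn_const Ioo_subset_Icc_self
    (closure_Ioo zero_ne_one).ge

end ClosedLoop

/-- For the closed-loop transmission line
`L·∂i/∂t = −∂(v − v*)/∂z − (R+K)(i − i*)`, `C·∂v/∂t = −∂i/∂z − G·v` with target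
profiles satisfying `G·v* + (i*)′ = 0`, zero boundary energy flow
`(∂i/∂t)(0,t) = (∂i/∂t)(1,t) = 0`, and the operator-norm condition
`∫₀¹ (∂²v/∂z∂t)² ≤ (G²L/C)∫₀¹ (∂v/∂t)²`, the closed-loop shaped potential
`P_d(t)` is nonincreasing, nonnegative, and vanishes exactly at the desired
equilibrium profile `(i*, v*)`. -/
theorem closed_loop_stability (L C R G K : ℝ)
    (hL : 0 < L) (hC : 0 < C) (hR : 0 < R) (hG : 0 < G) (hK : 0 < K)
    (istar vstar : ℝ → ℝ) (histar : ContDiff ℝ 1 istar) (hvstar : ContDiff ℝ 1 vstar)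
    (hstar : ∀ z ∈ Set.Icc (0:ℝ) 1, G * vstar z + deriv istar z = 0)
    (i v : ℝ → ℝ → ℝ)
    (hi : ContDiff ℝ 2 (Function.uncurry i)) (hv : ContDiff ℝ 2 (Function.uncurry v))
    (heq1 : ∀ t : ℝ, ∀ z ∈ Set.Icc (0:ℝ) 1,
      L * deriv (i z) t = -(deriv (fun w => v w t - vstar w) z)
        - (R + K) * (i z t - istar z))
    (heq2 : ∀ t : ℝ, ∀ z ∈ Set.Icc (0:ℝ) 1,
      C * deriv (v z) t = -(deriv (fun w => i w t) z) - G * v z t)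
    (hbd : ∀ t : ℝ, deriv (i 0) t = 0 ∧ deriv (i 1) t = 0)
    (hop : ∀ t : ℝ,
      (∫ z in (0:ℝ)..1, (deriv (fun w => deriv (v w) t) z) ^ 2)
        ≤ G ^ 2 * L / C * ∫ z in (0:ℝ)..1, (deriv (v z) t) ^ 2) :
    (∀ t : ℝ,
      deriv (fun τ => 1 / (2 * G) * ∫ z in (0:ℝ)..1,
          ((G * v z τ + deriv (fun w => i w τ) z) ^ 2
            + G * (K + R) * (i z τ - istar z) ^ 2
            + (G * vstar z + deriv (fun w => i w τ) z) ^ 2)) t ≤ 0)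
    ∧ (∀ t : ℝ,
        0 ≤ 1 / (2 * G) * ∫ z in (0:ℝ)..1,
          ((G * v z t + deriv (fun w => i w t) z) ^ 2
            + G * (K + R) * (i z t - istar z) ^ 2
            + (G * vstar z + deriv (fun w => i w t) z) ^ 2))
    ∧ (∀ t : ℝ,
        (1 / (2 * G) * ∫ z in (0:ℝ)..1,
          ((G * v z t + deriv (fun w => i w t) z) ^ 2
            + G * (K + R) * (i z t - istar z) ^ 2
            + (G * vstar z + deriv (fun w => i w t) z) ^ 2)) = 0
          ↔ ∀ z ∈ Set.Icc (0:ℝ) 1, i z t = istar z ∧ v z t = vstar z) := by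
  have hKR : 0 < K + R := add_pos hK hR
  have hc : 0 < 1 / (2 * G) := by positivity
  have hP : Continuous (uncurry (potentialDensity G K R istar vstar i v)) :=
    continuous_potentialDensity histar.continuous hvstar.continuous (hi.of_le one_le_two)
      hv.continuous
  have hP_nonneg := potentialDensity_nonneg (istar := istar) (vstar := vstar) (i := i) (v := v)
    hG.le hKR.le
  refine ⟨fun t => ?_, fun t => ?_, fun t => ?_⟩
  · have hD := hasDerivAt_intervalIntegral_of_continuous hP
      (continuous_potentialRate histar.continuous hvstar.continuous hi (hv.of_le one_le_two))
      (hasDerivAt_potentialDensity hi (hv.differentiable two_ne_zero)) 0 1 t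
    refine (hD.const_mul (1 / (2 * G))).deriv.trans_le (mul_nonpos_of_nonneg_of_nonpos hc.le ?_)
    exact integral_potentialRate_nonpos hL hC hG histar.continuous hvstar hi hv (heq1 t) (heq2 t)
      (hbd t) (hop t)
  · exact mul_nonneg hc.le (intervalIntegral.integral_nonneg zero_le_one fun z _ => hP_nonneg t z)
  · have hPt : Continuous (potentialDensity G K R istar vstar i v t) :=
      hP.comp (Continuous.prodMk_right t)
    change 1 / (2 * G) * ∫ z in (0:ℝ)..1, potentialDensity G K R istar vstar i v t z = 0 ↔ _
    rw [mul_eq_zero, or_iff_right hc.ne', intervalIntegral.integral_eq_zero_iff_eqOn_of_nonneg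
      zero_lt_one hPt.continuousOn fun z _ => hP_nonneg t z]
    exact eqOn_potentialDensity_zero_iff hG hKR hstar hPt
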